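/- arXiv:1501.07458 — 3 statements merged into one kernel-verified Lean document; each statement's English description precedes it below -/
import Mathlib

section
/- A distribution F on ℝ with \bar{F}(x) > 0 for all x is long-tailed if and only if there exists a monotone increasing function h with h(x) → ∞ and h(x) < x such that F(x - h(x), x + h(x)] = o(\bar{F}(x)) as x → ∞. -/
/-!
If `F` is long-tailed then `F(x - n, x + n] = F̄(x - n) - F̄(x + n) = o(F̄(x))` for every
fixed `n`, and a diagonal argument lets the window `n` grow slowly with `x`. Conversely, once
the window `h(x)` exceeds `1` it contains `(x, x + 1]`, so `F(x, x + 1] = o(F̄(x))`, which is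
long-tailedness.
-/

open MeasureTheory Filter Set Asymptotics

/-- Tail function of a distribution: `F̄(x) = μ(x, ∞)`. -/
noncomputable def tail (μ : Measure ℝ) (x : ℝ) : ℝ := (μ (Set.Ioi x)).toReal

/-- `F(a, b] = F(b) - F(a)`. -/
noncomputable def intv (μ : Measure ℝ) (a b : ℝ) : ℝ := (μ (Set.Ioc a b)).toReal

/-- A distribution is long-tailed if `F̄(x+1)/F̄(x) → 1` as `x → ∞`. -/
def LongTailed (μ : Measure ℝ) : Prop :=
  Tendsto (fun x => tail μ (x + 1) / tail μ x) atTop (nhds 1)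

/-- Convolution of two distributions on ℝ (law of the sum of independent rvs). -/
noncomputable def mconv (μ ν : Measure ℝ) : Measure ℝ :=
  Measure.map (fun p : ℝ × ℝ => p.1 + p.2) (μ.prod ν)

/-- `n`-fold convolution of a distribution with itself; `nconv μ 0` is the unit mass at 0. -/
noncomputable def nconv (μ : Measure ℝ) : ℕ → Measure ℝ
  | 0 => Measure.dirac 0
  | n + 1 => mconv (nconv μ n) μ

open Topology

theorem exists_monotone_tendsto_atTop_diag {u : ℕ → ℝ → ℝ}
    (hu : ∀ n, Tendsto (u n) atTop (𝓝 0)) :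
    ∃ g : ℝ → ℕ, Monotone g ∧ Tendsto g atTop atTop ∧
      Tendsto (fun x => u (g x) x) atTop (𝓝 0) := by
  have hY : ∀ n : ℕ, ∃ Y : ℝ, ∀ x ≥ Y, ‖u n x‖ ≤ 1 / (n + 1) := fun n =>
    eventually_atTop.1 <| (hu n).norm.eventually (ge_mem_nhds (by rw [norm_zero]; positivity))
  choose Y hY using hY
  set X : ℕ → ℝ := fun n => max (Y n) n
  classical
  -- `g x` is the largest `n` with `X n ≤ x`; as `X n ≥ n`, the cap `⌊x⌋₊` is harmless.
  set g : ℝ → ℕ := fun x => Nat.findGreatest (fun n => X n ≤ x) ⌊x⌋₊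
  have le_g : ∀ {n x}, X n ≤ x → n ≤ g x := fun {n x} hn =>
    Nat.le_findGreatest (Nat.le_floor ((le_max_right _ _).trans hn)) hn
  have hg_top : Tendsto g atTop atTop :=
    tendsto_atTop.2 fun n => (eventually_ge_atTop (X n)).mono fun _ => le_g
  refine ⟨g, fun a b hab => Nat.findGreatest_mono (fun _ hn => hn.trans hab)
    (Nat.floor_le_floor hab), hg_top, ?_⟩
  refine squeeze_zero_norm' ?_ (tendsto_one_div_add_atTop_nhds_zero_nat.comp hg_top)
  filter_upwards [eventually_ge_atTop (X 0)] with x hx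
  have hgx : X (g x) ≤ x := Nat.findGreatest_spec (P := fun n => X n ≤ x) (Nat.zero_le _) hx
  exact hY _ _ ((le_max_left _ _).trans hgx)

section FiniteMeasure

variable (μ : Measure ℝ) [IsFiniteMeasure μ]

theorem tail_eq_intv_add_tail {a b : ℝ} (hab : a ≤ b) :
    tail μ a = intv μ a b + tail μ b := by
  rw [tail, ← Ioc_union_Ioi_eq_Ioi hab,
    measure_union (Ioc_disjoint_Ioi le_rfl) measurableSet_Ioi,
    ENNReal.toReal_add (measure_ne_top μ _) (measure_ne_top μ _)]
  rfl

theorem intv_mono {a b a' b' : ℝ} (ha : a' ≤ a) (hb : b ≤ b') :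
    intv μ a b ≤ intv μ a' b' :=
  ENNReal.toReal_mono (measure_ne_top μ _) (measure_mono (Ioc_subset_Ioc ha hb))

theorem isBigO_intv_of_eventually_le {α : Type*} {l : Filter α} {a b a' b' : α → ℝ}
    (ha : ∀ᶠ x in l, a' x ≤ a x) (hb : ∀ᶠ x in l, b x ≤ b' x) :
    (fun x => intv μ (a x) (b x)) =O[l] fun x => intv μ (a' x) (b' x) := by
  refine IsBigO.of_bound' ?_
  filter_upwards [ha, hb] with x hax hbx
  exact abs_le_abs_of_nonneg ENNReal.toReal_nonneg (intv_mono μ hax hbx)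

variable {μ}

theorem tail_add_one_div_tail (hpos : ∀ x, 0 < tail μ x) (x : ℝ) :
    tail μ (x + 1) / tail μ x = 1 - intv μ x (x + 1) / tail μ x := by
  rw [eq_sub_iff_add_eq, ← add_div, div_eq_one_iff_eq (hpos x).ne',
    tail_eq_intv_add_tail μ (a := x) (b := x + 1) (by linarith), add_comm]

theorem longTailed_iff_isLittleO_intv (hpos : ∀ x, 0 < tail μ x) :
    LongTailed μ ↔ (fun x => intv μ x (x + 1)) =o[atTop] tail μ := by
  rw [isLittleO_iff_tendsto fun x hx => absurd hx (hpos x).ne', LongTailed]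
  simp_rw [tail_add_one_div_tail hpos]
  exact ⟨fun h => by simpa using h.const_sub 1, fun h => by simpa using h.const_sub 1⟩

end FiniteMeasure

namespace LongTailed

variable {μ : Measure ℝ} (hpos : ∀ x, 0 < tail μ x) (hL : LongTailed μ)
include hpos hL

theorem tendsto_tail_add_nat_div (n : ℕ) :
    Tendsto (fun x => tail μ (x + n) / tail μ x) atTop (𝓝 1) := by
  induction n with
  | zero => simp [div_self (hpos _).ne']
  | succ n ih =>
    have hshift := (hL.comp (tendsto_atTop_add_const_right atTop (n : ℝ) tendsto_id)).mul ih
    rw [one_mul] at hshift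
    refine hshift.congr fun x => ?_
    simp only [Function.comp_apply, id, Nat.cast_succ, ← add_assoc]
    exact div_mul_div_cancel₀ (hpos _).ne'

theorem tendsto_tail_sub_nat_div (n : ℕ) :
    Tendsto (fun x => tail μ (x - n) / tail μ x) atTop (𝓝 1) := by
  have h := ((hL.tendsto_tail_add_nat_div hpos n).comp
    (tendsto_atTop_add_const_right atTop (-n : ℝ) tendsto_id)).inv₀ one_ne_zero
  rw [inv_one] at h
  refine h.congr fun x => ?_
  simp [← sub_eq_add_neg]

theorem tendsto_intv_div_tail [IsFiniteMeasure μ] (n : ℕ) :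
    Tendsto (fun x => intv μ (x - n) (x + n) / tail μ x) atTop (𝓝 0) := by
  have h := (hL.tendsto_tail_sub_nat_div hpos n).sub (hL.tendsto_tail_add_nat_div hpos n)
  rw [sub_self] at h
  refine h.congr fun x => ?_
  have hle : x - n ≤ x + n := by linarith [n.cast_nonneg (α := ℝ)]
  rw [← sub_div, tail_eq_intv_add_tail μ hle, add_sub_cancel_right]

end LongTailed

/-- A distribution with everywhere positive tail is long-tailed iff there is a monotone
increasing function h growing to infinity, with h x < x, such that
F(x - h x, x + h x] = o(tail F x). -/
theorem stmt1 (μ : Measure ℝ) [IsProbabilityMeasure μ] (hpos : ∀ x, 0 < tail μ x) :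
    LongTailed μ ↔ ∃ h : ℝ → ℝ, Monotone h ∧ Tendsto h atTop atTop ∧ (∀ x, h x < x) ∧
      (fun x => intv μ (x - h x) (x + h x)) =o[atTop] tail μ := by
  constructor
  · intro hL
    obtain ⟨g, hg_mono, hg_top, hg⟩ :=
      exists_monotone_tendsto_atTop_diag (hL.tendsto_intv_div_tail hpos)
    have hg_o : (fun x => intv μ (x - g x) (x + g x)) =o[atTop] tail μ :=
      (isLittleO_iff_tendsto fun x hx => absurd hx (hpos x).ne').2 hg
    refine ⟨fun x => min (g x : ℝ) (x - 1), (Nat.mono_cast.comp hg_mono).min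
      fun a b hab => by linarith, ?_, fun x => by linarith [min_le_right (g x : ℝ) (x - 1)], ?_⟩
    · exact tendsto_inf_atTop _ (tendsto_natCast_atTop_atTop.comp hg_top)
        (tendsto_atTop_add_const_right atTop _ tendsto_id)
    · have hmin : ∀ᶠ x in atTop, min (g x : ℝ) (x - 1) ≤ g x :=
        .of_forall fun _ => min_le_left _ _
      refine (isBigO_intv_of_eventually_le μ ?_ ?_).trans_isLittleO hg_o
      · filter_upwards [hmin] with x hx using by linarith
      · filter_upwards [hmin] with x hx using by linarith
  · rintro ⟨h, -, htop, -, ho⟩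
    rw [longTailed_iff_isLittleO_intv hpos]
    have h_one := htop.eventually_ge_atTop 1
    refine (isBigO_intv_of_eventually_le μ ?_ ?_).trans_isLittleO ho
    · filter_upwards [h_one] with x hx using by linarith
    · filter_upwards [h_one] with x hx using by linarith
end

section
/- Let X₁,...,Xₙ be independent random variables with distributions F₁,...,Fₙ, and let Hₙ = F₁ * ⋯ * Fₙ be the distribution of their sum. If Hₙ is long-tailed, then for every c > 0 and every i ∈ {1,...,n}, Fᵢ(x - c, x + c] = o(\bar{Hₙ}(x)) as x → ∞. -/
/-!
Every factor `Fᵢ` is dominated on intervals by `Hₙ`: choosing for each other factor a window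
`(uⱼ, vⱼ]` of positive mass, `Hₙ(s + u, t + v] ≥ Fᵢ(s, t] · ∏ⱼ Fⱼ(uⱼ, vⱼ]` with `u = ∑ uⱼ`, `v = ∑ vⱼ`.
Long-tailedness gives `H̄(x + t) ~ H̄(x)` for every fixed `t`, so the `Hₙ`-mass of a window of bounded
length around `x` is `o(H̄(x))`, and hence so is `Fᵢ(x - c, x + c]`.
-/

open MeasureTheory Filter Set Asymptotics
open scoped ENNReal NNReal

/-- Convolution of a finite list of distributions. -/
noncomputable def convList : List (Measure ℝ) → Measure ℝ
  | [] => Measure.dirac 0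
  | μ :: l => mconv μ (convList l)

instance isProbabilityMeasure_mconv (μ ν : Measure ℝ) [IsProbabilityMeasure μ]
    [IsProbabilityMeasure ν] : IsProbabilityMeasure (mconv μ ν) :=
  Measure.isProbabilityMeasure_map (measurable_fst.add measurable_snd).aemeasurable

lemma isProbabilityMeasure_convList {l : List (Measure ℝ)} (hl : ∀ μ ∈ l, IsProbabilityMeasure μ) :
    IsProbabilityMeasure (convList l) := by
  induction l with
  | nil => exact Measure.dirac.isProbabilityMeasure
  | cons μ l ih =>
    have := hl μ List.mem_cons_self
    have := ih fun ν hν => hl ν (List.mem_cons_of_mem _ hν)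
    exact isProbabilityMeasure_mconv μ (convList l)

lemma measure_Ioc_mul_le_mconv (μ ν : Measure ℝ) [SFinite ν] (s t u v : ℝ) :
    μ (Ioc s t) * ν (Ioc u v) ≤ mconv μ ν (Ioc (s + u) (t + v)) := by
  rw [mconv, Measure.map_apply (by fun_prop) measurableSet_Ioc, ← Measure.prod_prod]
  refine measure_mono ?_
  rintro ⟨p, q⟩ ⟨⟨hp₁, hp₂⟩, hq₁, hq₂⟩
  exact ⟨add_lt_add_of_lt_of_le hp₁ hq₁.le, add_le_add hp₂ hq₂⟩

lemma exists_measure_Ioc_pos (μ : Measure ℝ) [NeZero μ] : ∃ u v : ℝ, 0 < μ (Ioc u v) := by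
  by_contra! h
  have : μ univ = 0 := by
    rw [← iUnion_Ioc_intCast]
    exact measure_iUnion_null fun n => nonpos_iff_eq_zero.mp (h _ _)
  exact NeZero.ne μ (Measure.measure_univ_eq_zero.mp this)

def IocDominated (μ ν : Measure ℝ) : Prop :=
  ∃ (u v : ℝ) (C : ℝ≥0), ∀ s t, μ (Ioc s t) ≤ C * ν (Ioc (s + u) (t + v))

namespace IocDominated

variable {μ ν ρ : Measure ℝ}

lemma trans (h₁ : IocDominated μ ν) (h₂ : IocDominated ν ρ) : IocDominated μ ρ := by
  obtain ⟨u, v, C, h₁⟩ := h₁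
  obtain ⟨u', v', C', h₂⟩ := h₂
  refine ⟨u + u', v + v', C * C', fun s t => ?_⟩
  calc μ (Ioc s t) ≤ C * ν (Ioc (s + u) (t + v)) := h₁ s t
    _ ≤ C * (C' * ρ (Ioc (s + u + u') (t + v + v'))) := by gcongr; exact h₂ _ _
    _ = (C * C' : ℝ≥0) * ρ (Ioc (s + (u + u')) (t + (v + v'))) := by
      rw [ENNReal.coe_mul, mul_assoc, add_assoc, add_assoc]

lemma of_mul_le {p : ℝ≥0∞} (hp₀ : p ≠ 0) (hp : p ≠ ∞) {u v : ℝ}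
    (h : ∀ s t, μ (Ioc s t) * p ≤ ν (Ioc (s + u) (t + v))) : IocDominated μ ν := by
  refine ⟨u, v, p.toNNReal⁻¹, fun s t => ?_⟩
  rw [ENNReal.coe_inv (by simp [ENNReal.toNNReal_eq_zero_iff, hp₀, hp]), ENNReal.coe_toNNReal hp,
    mul_comm, ← div_eq_mul_inv, ENNReal.le_div_iff_mul_le (.inl hp₀) (.inl hp)]
  exact h s t

lemma mconv_left (μ ν : Measure ℝ) [IsFiniteMeasure ν] [NeZero ν] :
    IocDominated μ (mconv μ ν) := by
  obtain ⟨u, v, hpos⟩ := exists_measure_Ioc_pos ν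
  exact of_mul_le hpos.ne' (measure_ne_top _ _) fun s t => measure_Ioc_mul_le_mconv μ ν s t u v

lemma mconv_right (μ ν : Measure ℝ) [IsFiniteMeasure μ] [NeZero μ] [SFinite ν] :
    IocDominated ν (mconv μ ν) := by
  obtain ⟨u, v, hpos⟩ := exists_measure_Ioc_pos μ
  refine of_mul_le (u := u) (v := v) hpos.ne' (measure_ne_top _ _) fun s t => ?_
  rw [mul_comm, add_comm s, add_comm t]
  exact measure_Ioc_mul_le_mconv μ ν u v s t

end IocDominated

lemma iocDominated_convList {l : List (Measure ℝ)} (hl : ∀ μ ∈ l, IsProbabilityMeasure μ) :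
    ∀ μ ∈ l, IocDominated μ (convList l) := by
  induction l with
  | nil => simp
  | cons ν l ih =>
    have := hl ν List.mem_cons_self
    have hl' : ∀ μ ∈ l, IsProbabilityMeasure μ := fun μ hμ => hl μ (List.mem_cons_of_mem _ hμ)
    have := isProbabilityMeasure_convList hl'
    rintro μ (_ | ⟨_, hμ⟩)
    · exact IocDominated.mconv_left ν (convList l)
    · exact (ih hl' μ hμ).trans (IocDominated.mconv_right ν (convList l))

lemma tail_antitone (H : Measure ℝ) [IsFiniteMeasure H] : Antitone (tail H) :=
  fun _ _ hxy => ENNReal.toReal_mono (measure_ne_top _ _) (measure_mono (Ioi_subset_Ioi hxy))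

lemma intv_eq_tail_sub (H : Measure ℝ) [IsFiniteMeasure H] {a b : ℝ} (hab : a ≤ b) :
    intv H a b = tail H a - tail H b := by
  have hsub : Ioi b ⊆ Ioi a := Ioi_subset_Ioi hab
  rw [intv, ← Ioi_sdiff_Ioi, measure_sdiff hsub measurableSet_Ioi.nullMeasurableSet
    (measure_ne_top _ _), ENNReal.toReal_sub_of_le (measure_mono hsub) (measure_ne_top _ _)]
  rfl

namespace LongTailed

variable {H : Measure ℝ} [IsFiniteMeasure H]

/-- A tail vanishing at some point vanishes from there on, and then `0 / 0 = 0` cannot tend to `1`. -/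
lemma tail_pos (hL : LongTailed H) (x : ℝ) : 0 < tail H x := by
  by_contra! hx
  have hzero : Tendsto (fun y => tail H (y + 1) / tail H y) atTop (nhds 0) := by
    refine tendsto_const_nhds.congr' ?_
    filter_upwards [eventually_ge_atTop x] with y hy
    have : tail H y = 0 := le_antisymm ((tail_antitone H hy).trans hx) ENNReal.toReal_nonneg
    simp [this]
  exact one_ne_zero (tendsto_nhds_unique hL hzero)

lemma tendsto_tail_add_nat (hL : LongTailed H) (m : ℕ) :
    Tendsto (fun x => tail H (x + m) / tail H x) atTop (nhds 1) := by
  induction m with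
  | zero =>
    refine tendsto_const_nhds.congr fun x => ?_
    rw [Nat.cast_zero, add_zero, div_self (hL.tail_pos x).ne']
  | succ m ih =>
    have hstep : Tendsto (fun x => tail H (x + m + 1) / tail H (x + m)) atTop (nhds 1) :=
      hL.comp (tendsto_atTop_add_const_right atTop (m : ℝ) tendsto_id)
    refine (mul_one (1 : ℝ) ▸ hstep.mul ih).congr fun x => ?_
    have := (hL.tail_pos (x + m)).ne'
    rw [Nat.cast_succ, ← add_assoc, div_mul_div_cancel₀ this]

lemma tendsto_tail_sub_nat (hL : LongTailed H) (m : ℕ) :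
    Tendsto (fun x => tail H (x - m) / tail H x) atTop (nhds 1) := by
  have hinv := (inv_one : (1 : ℝ)⁻¹ = 1) ▸ (hL.tendsto_tail_add_nat m).inv₀ one_ne_zero
  refine (hinv.comp (tendsto_atTop_add_const_right atTop (-(m : ℝ)) tendsto_id)).congr fun x => ?_
  simp [← sub_eq_add_neg]

lemma tendsto_tail_add (hL : LongTailed H) (t : ℝ) :
    Tendsto (fun x => tail H (x + t) / tail H x) atTop (nhds 1) := by
  obtain ⟨m, hm⟩ := exists_nat_ge |t|
  obtain ⟨hmt, htm⟩ := abs_le.mp hm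
  refine tendsto_of_tendsto_of_tendsto_of_le_of_le (hL.tendsto_tail_add_nat m)
    (hL.tendsto_tail_sub_nat m) (fun x => ?_) (fun x => ?_) <;>
    refine div_le_div_of_nonneg_right (tail_antitone H ?_) (hL.tail_pos x).le <;> linarith

lemma intv_isLittleO (hL : LongTailed H) (u v : ℝ) :
    (fun x => intv H (x + u) (x + v)) =o[atTop] tail H := by
  rcases le_or_gt u v with huv | hvu
  · refine (isLittleO_iff_tendsto fun x hx => absurd hx (hL.tail_pos x).ne').mpr ?_
    refine (sub_self (1 : ℝ) ▸ (hL.tendsto_tail_add u).sub (hL.tendsto_tail_add v)).congr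
      fun x => ?_
    rw [intv_eq_tail_sub H (by linarith), sub_div]
  · have : (fun x => intv H (x + u) (x + v)) = 0 :=
      funext fun x => by simp [intv, Ioc_eq_empty (by linarith : ¬x + u < x + v)]
    exact this ▸ isLittleO_zero _ _

lemma isLittleO_of_iocDominated (hL : LongTailed H) {μ : Measure ℝ} (h : IocDominated μ H)
    (s t : ℝ) :
    (fun x => intv μ (x + s) (x + t)) =o[atTop] tail H := by
  obtain ⟨u, v, C, h⟩ := h
  refine IsBigO.trans_isLittleO (IsBigO.of_bound C (Eventually.of_forall fun x => ?_))
    (hL.intv_isLittleO (s + u) (t + v))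
  simp only [Real.norm_eq_abs, abs_of_nonneg ENNReal.toReal_nonneg, intv, ← add_assoc]
  exact ENNReal.toReal_mono (by finiteness) (h _ _) |>.trans_eq (ENNReal.toReal_mul ..)

end LongTailed

theorem stmt3_general (n : ℕ) (F : Fin n → Measure ℝ)
    [∀ i, IsProbabilityMeasure (F i)]
    (hL : LongTailed (convList (List.ofFn F))) :
    ∀ c > 0, ∀ i : Fin n,
      (fun x => intv (F i) (x - c) (x + c)) =o[atTop] tail (convList (List.ofFn F)) := by
  intro c _ i
  have hprob : ∀ μ ∈ List.ofFn F, IsProbabilityMeasure μ := by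
    simp only [List.mem_ofFn]
    rintro _ ⟨j, rfl⟩
    infer_instance
  have := isProbabilityMeasure_convList hprob
  have hdom := iocDominated_convList hprob (F i) (List.mem_ofFn.mpr ⟨i, rfl⟩)
  simpa only [sub_eq_add_neg] using hL.isLittleO_of_iocDominated hdom (-c) c

/-- If Hn = F1 * ... * Fn is long-tailed, then for every c > 0 and every i,
Fi(x - c, x + c] = o(tail Hn x). -/
theorem stmt3 (n : ℕ) (hn : 1 ≤ n) (F : Fin n → Measure ℝ)
    [∀ i, IsProbabilityMeasure (F i)]
    (hL : LongTailed (convList (List.ofFn F))) :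
    ∀ c > 0, ∀ i : Fin n,
      (fun x => intv (F i) (x - c) (x + c)) =o[atTop] tail (convList (List.ofFn F)) :=
  stmt3_general n F hL
end

section
/- Let F be a distribution on [0,∞) with \bar{F}(x) > 0 for all x, F^{*2} ∈ L ∩ OS, and assume: (i) for any ε₀ ∈ (0,1) there is K > 0 with \overline{F^{*2m}}(x) ≤ K(C*(F^{*2}) - 1 + ε₀)^m \overline{F^{*2}}(x) for all m ≥ 1, x ≥ 0, and (ii) limsup_{x→∞} \overline{F^{*2m}}(x)/\overline{F^{*2}}(x) ≤ m(C*(F^{*2}) - 1)^{m-1} for all m ≥ 1. If τ is a counting random variable with pₖ = P(τ = k) satisfying ∑_{m≥1}(p_{2m-1}+p_{2m})(C*(F^{*2}) - 1 + ε₀)^m < ∞ for some ε₀ > 0, then limsup_{x→∞} \overline{F^{*τ}}(x)/\overline{F^{*2}}(x) ≤ ∑_{m=1}^∞ m(p_{2m-1}+p_{2m})(C*(F^{*2}) - 1)^{m-1} < ∞. -/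
open MeasureTheory Filter Set Asymptotics

/-- The class OS of generalised subexponential distributions. -/
def OSClass (μ : Measure ℝ) : Prop :=
  (∀ x, 0 < tail μ x) ∧ ∃ M : ℝ, ∀ᶠ x in atTop, tail (mconv μ μ) x ≤ M * tail μ x

/-- C*(G) = limsup tail(G*G)(x)/tail(G)(x). -/
noncomputable def Cstar (μ : Measure ℝ) : ℝ :=
  atTop.limsup (fun x => tail (mconv μ μ) x / tail μ x)

/-! The mixture is dominated by its "rounded-up" version: on `[0, ∞)` the tails of `F^{*k}`
increase with `k` and `F^{*0}` has no mass above `0`, so, since `τ ≤ 2⌈τ/2⌉`, the tail of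
`F^{*τ}` is at most `∑ₘ (p_{2m-1} + p_{2m}) · tail(F^{*2m})`. Divided by `tail(F^{*2})`, the
`m`-th term is bounded uniformly by the Kesten-type bound (i), which is summable against the
weights, and its limsup by (ii); a reverse Fatou argument for series then gives the claim. -/

instance (μ ν : Measure ℝ) [IsProbabilityMeasure μ] [IsProbabilityMeasure ν] :
    IsProbabilityMeasure (mconv μ ν) :=
  inferInstanceAs (IsProbabilityMeasure (μ ∗ ν))

instance (F : Measure ℝ) [IsProbabilityMeasure F] (n : ℕ) :
    IsProbabilityMeasure (nconv F n) := by
  induction n with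
  | zero => exact Measure.dirac.isProbabilityMeasure
  | succ n _ => exact inferInstanceAs (IsProbabilityMeasure (mconv _ _))

lemma tail_nonneg (μ : Measure ℝ) (x : ℝ) : 0 ≤ tail μ x := ENNReal.toReal_nonneg

lemma tail_le_one (μ : Measure ℝ) [IsProbabilityMeasure μ] (x : ℝ) : tail μ x ≤ 1 :=
  measureReal_le_one

lemma mconv_Iio_zero {μ ν : Measure ℝ} [SFinite ν] (hμ : μ (Iio 0) = 0)
    (hν : ν (Iio 0) = 0) : mconv μ ν (Iio 0) = 0 := by
  rw [mconv, Measure.map_apply measurable_add measurableSet_Iio]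
  refine measure_mono_null (t := Iio 0 ×ˢ univ ∪ univ ×ˢ Iio 0) ?_ (measure_union_null ?_ ?_)
  · rintro ⟨a, b⟩ (h : a + b < 0)
    by_cases ha : a < 0
    · exact Or.inl ⟨ha, trivial⟩
    · exact Or.inr ⟨trivial, show b < 0 by linarith⟩
  · rw [Measure.prod_prod, hμ, zero_mul]
  · rw [Measure.prod_prod, hν, mul_zero]

lemma nconv_Iio_zero {F : Measure ℝ} [SFinite F] (hF : F (Iio 0) = 0) (n : ℕ) :
    nconv F n (Iio 0) = 0 := by
  induction n with
  | zero => simp [nconv]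
  | succ n ih => exact mconv_Iio_zero ih hF

lemma tail_le_tail_mconv (μ ν : Measure ℝ) [IsFiniteMeasure μ] [IsProbabilityMeasure ν]
    (hν : ν (Iio 0) = 0) (x : ℝ) : tail μ x ≤ tail (mconv μ ν) x := by
  refine ENNReal.toReal_mono (measure_ne_top (μ ∗ ν) _) ?_
  rw [mconv, Measure.map_apply measurable_add measurableSet_Ioi]
  have hν1 : ν (Ici 0) = 1 := by
    rw [← compl_Iio, prob_compl_eq_one_iff measurableSet_Iio, hν]
  calc μ (Ioi x) = (μ.prod ν) (Ioi x ×ˢ Ici 0) := by rw [Measure.prod_prod, hν1, mul_one]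
    _ ≤ _ := measure_mono fun ⟨a, b⟩ ⟨(ha : x < a), (hb : 0 ≤ b)⟩ =>
      show x < a + b by linarith

lemma monotone_tail_nconv {F : Measure ℝ} [IsProbabilityMeasure F] (hF : F (Iio 0) = 0)
    (x : ℝ) : Monotone fun n => tail (nconv F n) x :=
  monotone_nat_of_le_succ fun _ => tail_le_tail_mconv _ _ hF x

lemma tail_nconv_zero_of_nonneg (F : Measure ℝ) {x : ℝ} (hx : 0 ≤ x) :
    tail (nconv F 0) x = 0 := by
  simp [tail, nconv, Measure.dirac_apply' _ measurableSet_Ioi, not_lt.2 hx]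

lemma tail_sum_smul (μ : ℕ → Measure ℝ) [∀ k, IsFiniteMeasure (μ k)] {p : ℕ → ℝ}
    (hp : ∀ k, 0 ≤ p k) (x : ℝ) :
    tail (Measure.sum fun k => ENNReal.ofReal (p k) • μ k) x = ∑' k, p k * tail (μ k) x := by
  rw [tail, Measure.sum_apply _ measurableSet_Ioi,
    ENNReal.tsum_toReal_eq fun k => by simp [ENNReal.mul_eq_top, measure_ne_top]]
  simp [tail, ENNReal.toReal_mul, ENNReal.toReal_ofReal (hp _)]

lemma tsum_eq_zero_add_tsum_pair {E : Type*} [NormedAddCommGroup E] [CompleteSpace E]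
    {s : ℕ → E} (hs : Summable s) :
    ∑' k, s k = s 0 + ∑' m, (s (2 * m + 1) + s (2 * m + 2)) := by
  have hodd : Summable fun m => s (2 * m + 1) :=
    hs.comp_injective fun a b (h : 2 * a + 1 = 2 * b + 1) => by omega
  have heven : Summable fun m => s (2 * m + 2) :=
    hs.comp_injective fun a b (h : 2 * a + 2 = 2 * b + 2) => by omega
  rw [hs.tsum_eq_zero_add, hodd.tsum_add heven,
    tsum_even_add_odd (f := fun k => s (k + 1)) hodd heven]

lemma summable_mul_tail_nconv (F : Measure ℝ) [IsProbabilityMeasure F] {p : ℕ → ℝ}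
    (hp0 : ∀ k, 0 ≤ p k) (hp : Summable p) (n : ℕ → ℕ) (x : ℝ) :
    Summable fun k => p k * tail (nconv F (n k)) x :=
  hp.of_nonneg_of_le (fun k => mul_nonneg (hp0 k) (tail_nonneg _ x))
    fun k => mul_le_of_le_one_right (hp0 k) (tail_le_one _ x)

lemma tail_mixture_le {F : Measure ℝ} [IsProbabilityMeasure F] (hF : F (Iio 0) = 0)
    {p : ℕ → ℝ} (hp0 : ∀ k, 0 ≤ p k) (hp : Summable p) {x : ℝ} (hx : 0 ≤ x) :
    tail (Measure.sum fun k => ENNReal.ofReal (p k) • nconv F k) x ≤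
      ∑' m, (p (2 * m + 1) + p (2 * m + 2)) * tail (nconv F (2 * (m + 1))) x := by
  rw [tail_sum_smul _ hp0]
  -- `(k + 1) / 2 = ⌈k / 2⌉`
  calc ∑' k, p k * tail (nconv F k) x
      ≤ ∑' k, p k * tail (nconv F (2 * ((k + 1) / 2))) x :=
        (summable_mul_tail_nconv F hp0 hp id x).tsum_le_tsum
          (fun k => mul_le_mul_of_nonneg_left (monotone_tail_nconv hF x (by omega)) (hp0 k))
          (summable_mul_tail_nconv F hp0 hp _ x)
    _ = _ := by
      rw [tsum_eq_zero_add_tsum_pair (summable_mul_tail_nconv F hp0 hp _ x),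
        show 2 * ((0 + 1) / 2) = 0 by norm_num, tail_nconv_zero_of_nonneg F hx, mul_zero, zero_add]
      refine tsum_congr fun m => ?_
      rw [show (2 * m + 1 + 1) / 2 = m + 1 by omega, show (2 * m + 2 + 1) / 2 = m + 1 by omega,
        add_mul]

lemma tail_mixture_div_le {F : Measure ℝ} [IsProbabilityMeasure F] (hF : F (Iio 0) = 0)
    {p : ℕ → ℝ} (hp0 : ∀ k, 0 ≤ p k) (hp : Summable p) (G : Measure ℝ) {x : ℝ}
    (hx : 0 ≤ x) :
    tail (Measure.sum fun k => ENNReal.ofReal (p k) • nconv F k) x / tail G x ≤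
      ∑' m, (p (2 * m + 1) + p (2 * m + 2)) * (tail (nconv F (2 * (m + 1))) x / tail G x) := by
  simp_rw [← mul_div_assoc, tsum_div_const]
  exact div_le_div_of_nonneg_right (tail_mixture_le hF hp0 hp hx) (tail_nonneg G x)

lemma one_le_Cstar {G : Measure ℝ} [IsProbabilityMeasure G] (hG : G (Iio 0) = 0)
    (hOS : OSClass G) : 1 ≤ Cstar G := by
  obtain ⟨hpos, M, hM⟩ := hOS
  have hbdd : IsBoundedUnder (· ≤ ·) atTop fun x => tail (mconv G G) x / tail G x :=
    ⟨M, eventually_map.2 (hM.mono fun x hx => (div_le_iff₀ (hpos x)).2 hx)⟩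
  exact le_limsup_of_frequently_le
    (Frequently.of_forall fun x => (one_le_div (hpos x)).2 (tail_le_tail_mconv G G hG x)) hbdd

lemma summable_succ_mul_mul_pow {q : ℕ → ℝ} {r ε : ℝ} (hr : 0 ≤ r) (hε : 0 < ε)
    (h : Summable fun m => q m * (r + ε) ^ (m + 1)) :
    Summable fun m : ℕ => ((m : ℝ) + 1) * q m * r ^ m := by
  have hlt : ‖r‖ < r + ε := by rw [Real.norm_of_nonneg hr]; linarith
  have hpoly : (fun m : ℕ => ((m : ℝ) + 1) * r ^ m) =O[atTop] fun m => (r + ε) ^ m := by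
    simpa [add_mul] using (isLittleO_pow_const_mul_const_pow_const_pow_of_norm_lt 1 hlt).isBigO.add
      (isLittleO_pow_const_mul_const_pow_const_pow_of_norm_lt 0 hlt).isBigO
  have hshift : (fun m : ℕ => (r + ε) ^ m) =O[atTop] fun m => (r + ε) ^ (m + 1) := by
    simpa only [pow_succ'] using isBigO_self_const_mul (add_pos_of_nonneg_of_pos hr hε).ne'
      (fun m : ℕ => (r + ε) ^ m) atTop
  refine summable_of_isBigO_nat h ?_
  exact ((isBigO_refl q atTop).mul (hpoly.trans hshift)).congr_left fun m => by ring

theorem limsup_le_tsum_of_dominated {α : Type*} {l : Filter α} [l.NeBot] {u : α → ℝ}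
    {f : ℕ → α → ℝ} {w g a : ℕ → ℝ} (hw : ∀ m, 0 ≤ w m)
    (hwg : Summable fun m => w m * g m) (hwa : Summable fun m => w m * a m)
    (hf : ∀ᶠ x in l, ∀ m, 0 ≤ f m x ∧ f m x ≤ g m) (hu0 : ∀ᶠ x in l, 0 ≤ u x)
    (hu : ∀ᶠ x in l, u x ≤ ∑' m, w m * f m x) (hlim : ∀ m, limsup (f m) l ≤ a m) :
    limsup u l ≤ ∑' m, w m * a m := by
  have hcut : ∀ N, ∀ δ > 0, limsup u l ≤
      ∑ m ∈ Finset.range N, w m * (a m + δ) + ∑' m, w (m + N) * g (m + N) := by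
    intro N δ hδ
    have hnear : ∀ᶠ x in l, ∀ m ∈ Finset.range N, f m x < a m + δ :=
      (Finset.eventually_all _).2 fun m _ => eventually_lt_of_limsup_lt
        ((hlim m).trans_lt (lt_add_of_pos_right _ hδ))
        ⟨g m, eventually_map.2 (hf.mono fun x hx => (hx m).2)⟩
    refine limsup_le_of_le (isCoboundedUnder_le_of_eventually_le l hu0) ?_
    filter_upwards [hf, hu, hnear] with x hfx hux hnx
    have hsum : Summable fun m => w m * f m x := hwg.of_nonneg_of_le
      (fun m => mul_nonneg (hw m) (hfx m).1) fun m => mul_le_mul_of_nonneg_left (hfx m).2 (hw m)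
    calc u x ≤ ∑' m, w m * f m x := hux
      _ = ∑ m ∈ Finset.range N, w m * f m x + ∑' m, w (m + N) * f (m + N) x :=
        (hsum.sum_add_tsum_nat_add N).symm
      _ ≤ _ := add_le_add
        (Finset.sum_le_sum fun m hm => mul_le_mul_of_nonneg_left (hnx m hm).le (hw m))
        (((summable_nat_add_iff N).2 hsum).tsum_le_tsum
          (fun m => mul_le_mul_of_nonneg_left (hfx _).2 (hw _)) ((summable_nat_add_iff N).2 hwg))
  have hN : ∀ N, limsup u l ≤
      ∑ m ∈ Finset.range N, w m * a m + ∑' m, w (m + N) * g (m + N) := by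
    intro N
    let B : ℝ → ℝ := fun δ =>
      ∑ m ∈ Finset.range N, w m * (a m + δ) + ∑' m, w (m + N) * g (m + N)
    have hB : Tendsto B (nhdsWithin 0 (Ioi 0)) (nhds (B 0)) :=
      ((by fun_prop : Continuous B).tendsto 0).mono_left nhdsWithin_le_nhds
    simpa [B] using ge_of_tendsto hB (eventually_nhdsWithin_of_forall fun δ hδ => hcut N δ hδ)
  have hN0 : Tendsto (fun N => ∑ m ∈ Finset.range N, w m * a m + ∑' m, w (m + N) * g (m + N))
      atTop (nhds (∑' m, w m * a m)) := by
    simpa using hwa.hasSum.tendsto_sum_nat.add (tendsto_sum_nat_add fun m => w m * g m)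
  exact ge_of_tendsto' hN0 hN

theorem stmt17_general (F : Measure ℝ) [IsProbabilityMeasure F] (hsupp : F (Set.Iio 0) = 0)
    (hOS : OSClass (nconv F 2))
    (hi : ∀ ε₀ ∈ Set.Ioo (0:ℝ) 1, ∃ K > 0, ∀ m : ℕ, 1 ≤ m → ∀ x : ℝ, 0 ≤ x →
      tail (nconv F (2 * m)) x ≤
        K * (Cstar (nconv F 2) - 1 + ε₀) ^ m * tail (nconv F 2) x)
    (hii : ∀ m : ℕ, 1 ≤ m →
      atTop.limsup (fun x => tail (nconv F (2 * m)) x / tail (nconv F 2) x) ≤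
        (m : ℝ) * (Cstar (nconv F 2) - 1) ^ (m - 1))
    (p : ℕ → ℝ) (hp0 : ∀ k, 0 ≤ p k) (hpsum : ∑' k, p k = 1)
    (ε₀ : ℝ) (hε₀ : 0 < ε₀)
    (hsum : Summable (fun m : ℕ =>
      (p (2 * m + 1) + p (2 * m + 2)) * (Cstar (nconv F 2) - 1 + ε₀) ^ (m + 1))) :
    Summable (fun m : ℕ =>
      ((m : ℝ) + 1) * (p (2 * m + 1) + p (2 * m + 2)) * (Cstar (nconv F 2) - 1) ^ m) ∧
    atTop.limsup (fun x =>
        tail (Measure.sum (fun k => ENNReal.ofReal (p k) • nconv F k)) x /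
          tail (nconv F 2) x) ≤
      ∑' m : ℕ,
        ((m : ℝ) + 1) * (p (2 * m + 1) + p (2 * m + 2)) * (Cstar (nconv F 2) - 1) ^ m := by
  set G := nconv F 2
  set C := Cstar G
  have hC : 0 ≤ C - 1 := sub_nonneg.2 (one_le_Cstar (nconv_Iio_zero hsupp 2) hOS)
  have hp : Summable p := by
    by_contra h
    simp [tsum_eq_zero_of_not_summable h] at hpsum
  have hA := summable_succ_mul_mul_pow hC hε₀ hsum
  refine ⟨hA, ?_⟩
  -- (i) is only available for `ε < 1`, while `ε₀` may be large
  obtain ⟨K, hK, hKb⟩ :=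
    hi (min ε₀ (1 / 2)) ⟨lt_min hε₀ (by norm_num), (min_le_right _ _).trans_lt (by norm_num)⟩
  have hdom : ∀ m, ∀ x ≥ 0,
      tail (nconv F (2 * (m + 1))) x / tail G x ≤ K * (C - 1 + ε₀) ^ (m + 1) := by
    intro m x hx
    rw [div_le_iff₀ (hOS.1 x)]
    refine (hKb (m + 1) (by omega) x hx).trans ?_
    have hpow : (C - 1 + min ε₀ (1 / 2)) ^ (m + 1) ≤ (C - 1 + ε₀) ^ (m + 1) :=
      pow_le_pow_left₀ (add_nonneg hC (le_min hε₀.le (by norm_num)))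
        (add_le_add_right (min_le_left _ _) _) _
    exact mul_le_mul_of_nonneg_right (mul_le_mul_of_nonneg_left hpow hK.le) (tail_nonneg _ x)
  refine (limsup_le_tsum_of_dominated (w := fun m => p (2 * m + 1) + p (2 * m + 2))
    (f := fun m x => tail (nconv F (2 * (m + 1))) x / tail G x)
    (g := fun m => K * (C - 1 + ε₀) ^ (m + 1)) (a := fun m => (m + 1) * (C - 1) ^ m)
    (fun m => add_nonneg (hp0 _) (hp0 _)) ?_ ?_ ?_ ?_ ?_ fun m => ?_).trans_eq
    (tsum_congr fun m => by ring)
  · simpa only [mul_left_comm] using hsum.mul_left K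
  · exact hA.congr fun m => by ring
  · filter_upwards [eventually_ge_atTop 0] with x hx m
    exact ⟨div_nonneg (tail_nonneg _ x) (tail_nonneg _ x), hdom m x hx⟩
  · exact Eventually.of_forall fun x => div_nonneg (tail_nonneg _ x) (tail_nonneg _ x)
  · filter_upwards [eventually_ge_atTop 0] with x hx using tail_mixture_div_le hsupp hp0 hp G hx
  · simpa using hii (m + 1) (by omega)

/-- Upper bound for limsup tail(F^{*τ})/tail(F^{*2}): under a Kesten-type bound (i),
the per-term limsup bound (ii) and the summability condition on τ, the limsup of
tail(F^{*τ})(x)/tail(F^{*2})(x) is bounded by the (finite) series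
∑_m m (p_{2m-1} + p_{2m}) (C*(F^{*2}) - 1)^{m-1}. -/
theorem stmt17 (F : Measure ℝ) [IsProbabilityMeasure F] (hsupp : F (Set.Iio 0) = 0)
    (hpos : ∀ x, 0 < tail F x)
    (hL : LongTailed (nconv F 2)) (hOS : OSClass (nconv F 2))
    (hi : ∀ ε₀ ∈ Set.Ioo (0:ℝ) 1, ∃ K > 0, ∀ m : ℕ, 1 ≤ m → ∀ x : ℝ, 0 ≤ x →
      tail (nconv F (2 * m)) x ≤
        K * (Cstar (nconv F 2) - 1 + ε₀) ^ m * tail (nconv F 2) x)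
    (hii : ∀ m : ℕ, 1 ≤ m →
      atTop.limsup (fun x => tail (nconv F (2 * m)) x / tail (nconv F 2) x) ≤
        (m : ℝ) * (Cstar (nconv F 2) - 1) ^ (m - 1))
    (p : ℕ → ℝ) (hp0 : ∀ k, 0 ≤ p k) (hpsum : ∑' k, p k = 1)
    (ε₀ : ℝ) (hε₀ : 0 < ε₀)
    (hsum : Summable (fun m : ℕ =>
      (p (2 * m + 1) + p (2 * m + 2)) * (Cstar (nconv F 2) - 1 + ε₀) ^ (m + 1))) :
    Summable (fun m : ℕ =>
      ((m : ℝ) + 1) * (p (2 * m + 1) + p (2 * m + 2)) * (Cstar (nconv F 2) - 1) ^ m) ∧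
    atTop.limsup (fun x =>
        tail (Measure.sum (fun k => ENNReal.ofReal (p k) • nconv F k)) x /
          tail (nconv F 2) x) ≤
      ∑' m : ℕ,
        ((m : ℝ) + 1) * (p (2 * m + 1) + p (2 * m + 2)) * (Cstar (nconv F 2) - 1) ^ m :=
  stmt17_general F hsupp hOS hi hii p hp0 hpsum ε₀ hε₀ hsum
end
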